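/- The conjugate state vector ⟨\Psi_M^{(k)}| = ⟨0|\phi_k C(v_2)···C(v_N) expands as \sum_\lambda \psi_\lambda ⟨\lambda|, where the sum runs exactly over partitions \lambda with (k) ⊆ \lambda ⊆ (M^{N-1}, k) — that is, \lambda has at most N parts, first part at most M, last (N-th) part at most k, and at least one part ≥ k (equivalently \lambda_1 ≥ k when interpreted with \lambda ⊇ (k)). -/

import Mathlib

open Finset

noncomputable section

/-- The Fock space of the phase model on `M+1` sites. -/
abbrev FockM (M : ℕ) := (Fin (M + 1) → ℕ) →₀ ℂ

/-- The local annihilation operator `φ_j`. -/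
def phiOp (M : ℕ) (j : Fin (M + 1)) : Module.End ℂ (FockM M) :=
  Finsupp.lsum ℂ fun c =>
    if c j = 0 then 0 else Finsupp.lsingle (Function.update c j (c j - 1))

/-- The local creation operator `φ_j^†`. -/
def phiDagOp (M : ℕ) (j : Fin (M + 1)) : Module.End ℂ (FockM M) :=
  Finsupp.lmapDomain ℂ ℂ fun c => Function.update c j (c j + 1)

/-- The local `L`-operator of the phase model, `L_j(u) = [[1/u, φ_j^†], [φ_j, u]]`. -/
def Lop (M : ℕ) (j : Fin (M + 1)) (u : ℂ) :
    Matrix (Fin 2) (Fin 2) (Module.End ℂ (FockM M)) :=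
  !![u⁻¹ • 1, phiDagOp M j; phiOp M j, u • 1]

/-- The monodromy matrix `T(u) = L_M(u) L_{M-1}(u) ⋯ L_0(u)`. -/
def Tmon (M : ℕ) (u : ℂ) : Matrix (Fin 2) (Fin 2) (Module.End ℂ (FockM M)) :=
  (List.ofFn fun i : Fin (M + 1) => Lop M (Fin.rev i) u).prod

/-- The annihilation operator `C(u)`. -/
def Cop (M : ℕ) (u : ℂ) : Module.End ℂ (FockM M) := Tmon M u 1 0

/-- The conjugate vacuum `⟨0|`. -/
def covac (M : ℕ) : FockM M →ₗ[ℂ] ℂ := Finsupp.lapply (fun _ => 0)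

/-- The occupation-number configuration of the partition `λ`:
`n_k = #{i | λ_i = k}`, i.e. `λ = (M^{n_M}, …, 1^{n_1}, 0^{n_0})`. -/
def configOf {N : ℕ} (M : ℕ) (lam : Fin N → ℕ) : Fin (M + 1) → ℕ :=
  fun k => (Finset.univ.filter fun i => lam i = (k : ℕ)).card

/-- The conjugate basis state `⟨λ|`, as a linear functional. -/
def colam {N : ℕ} (M : ℕ) (lam : Fin N → ℕ) : FockM M →ₗ[ℂ] ℂ :=
  Finsupp.lapply (configOf M lam)

end

instance {N M : ℕ} : DecidablePred (Antitone : (Fin N → Fin M) → Prop) := fun f =>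
  decidable_of_iff (∀ a b, a ≤ b → f b ≤ f a) Iff.rfl

/-!
Expanding `C(u) = T(u)₁₀` with `T(u) = L_M(u) ⋯ L_0(u)`, every term removes a particle at some
site and then alternately creates and removes particles at strictly increasing sites, ending with
a removal. In terms of the tail counts `#{particles at sites ≥ j}` (the column lengths of the
partition of an occupation configuration) such a move lowers the total by one and every tail
count by `0` or `1`. Hence `C(v_2) ⋯ C(v_N)` connects `|c⟩` only to states whose tail counts lie
between those of `c` minus `N - 1` and those of `c`, and pairing with `⟨0|φ_k = ⟨δ_k|` forces `c`
to hold `N` particles, at least one at a site `≥ k` and at least one at a site `≤ k`. Listing the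
occupied sites in decreasing order gives the unique partition `λ` of `c`, and these conditions say
`λ_1 ≥ k ≥ λ_N`.
-/

namespace Finsupp

variable {α β γ R : Type*} [Semiring R]

theorem map_mem_supported_of_single_mem (A : (α →₀ R) →ₗ[R] (β →₀ R)) {s : Set α}
    {t : Set β} (h : ∀ a ∈ s, A (single a 1) ∈ supported R R t) {x : α →₀ R}
    (hx : x ∈ supported R R s) : A x ∈ supported R R t := by
  suffices supported R R s ≤ (supported R R t).comap A from this hx
  rw [supported_eq_span_single, Submodule.span_le]
  rintro _ ⟨a, ha, rfl⟩
  exact h a ha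

def SendsAlong (A : (α →₀ R) →ₗ[R] (β →₀ R)) (r : α → β → Prop) : Prop :=
  ∀ a, A (single a 1) ∈ supported R R {b | r a b}

theorem sendsAlong_id : SendsAlong (LinearMap.id : (α →₀ R) →ₗ[R] (α →₀ R)) Eq :=
  fun _ => single_mem_supported R 1 rfl

theorem sendsAlong_zero (r : α → β → Prop) : SendsAlong (0 : (α →₀ R) →ₗ[R] (β →₀ R)) r :=
  fun _ => zero_mem _

namespace SendsAlong

variable {A B : (α →₀ R) →ₗ[R] (β →₀ R)} {r r' : α → β → Prop}

theorem mono (hA : SendsAlong A r) (h : ∀ a b, r a b → r' a b) : SendsAlong A r' :=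
  fun a => supported_mono (fun b => h a b) (hA a)

theorem add (hA : SendsAlong A r) (hB : SendsAlong B r) : SendsAlong (A + B) r :=
  fun a => add_mem (hA a) (hB a)

theorem smul {R : Type*} [CommSemiring R] {A : (α →₀ R) →ₗ[R] (β →₀ R)} (c : R)
    (hA : SendsAlong A r) : SendsAlong (c • A) r :=
  fun a => Submodule.smul_mem _ c (hA a)

theorem comp {C : (β →₀ R) →ₗ[R] (γ →₀ R)} {s : β → γ → Prop} (hA : SendsAlong A r)
    (hC : SendsAlong C s) : SendsAlong (C ∘ₗ A) (Relation.Comp r s) := fun a =>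
  map_mem_supported_of_single_mem C
    (fun b hb => supported_mono (fun _ hc => (⟨b, hb, hc⟩ : Relation.Comp r s a _)) (hC b))
    (hA a)

theorem apply_ne_zero (hA : SendsAlong A r) {a : α} {b : β} (h : A (single a 1) b ≠ 0) :
    r a b := by
  by_contra hr
  exact h ((mem_supported' R _).1 (hA a) b hr)

end SendsAlong

theorem exists_eq_sum_smul_lapply {R ι : Type*} [CommSemiring R] (f : (α →₀ R) →ₗ[R] R)
    (s : Finset ι) (g : ι → α) (hg : Set.InjOn g s)
    (hf : ∀ a, f (single a 1) ≠ 0 → ∃ x ∈ s, g x = a) :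
    ∃ ψ : ι → R, f = ∑ x ∈ s, ψ x • lapply (g x) := by
  classical
  refine ⟨fun x => f (single (g x) 1), ?_⟩
  ext a
  simp only [LinearMap.coe_comp, Function.comp_apply, lsingle_apply, LinearMap.sum_apply,
    LinearMap.smul_apply, lapply_apply, single_apply, smul_eq_mul, mul_ite, mul_one, mul_zero]
  rw [← Finset.sum_image (f := fun b => if a = b then f (single b 1) else 0) hg,
    Finset.sum_ite_eq]
  split_ifs with ha
  · rfl
  · by_contra hne
    obtain ⟨x, hx, rfl⟩ := hf a hne
    exact ha (Finset.mem_image_of_mem g hx)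

end Finsupp

section TailCount

variable {n : ℕ}

def tailCount (c : Fin n → ℕ) (j : ℕ) : ℕ :=
  ∑ t ∈ univ.filter (fun t : Fin n => j ≤ t), c t

theorem tailCount_add (c d : Fin n → ℕ) (j : ℕ) :
    tailCount (c + d) j = tailCount c j + tailCount d j :=
  Finset.sum_add_distrib

theorem tailCount_single (i : Fin n) (j : ℕ) :
    tailCount (Pi.single i 1) j = if j ≤ i then 1 else 0 := by
  simp [tailCount, Pi.single_apply]

theorem tailCount_zero (c : Fin n → ℕ) : tailCount c 0 = ∑ t, c t := by
  simp [tailCount]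

theorem exists_le_ne_zero_of_tailCount_ne_zero {c : Fin n → ℕ} {j : ℕ}
    (h : tailCount c j ≠ 0) : ∃ t : Fin n, j ≤ (t : ℕ) ∧ c t ≠ 0 := by
  obtain ⟨t, ht, hct⟩ := Finset.exists_ne_zero_of_sum_ne_zero h
  exact ⟨t, (Finset.mem_filter.1 ht).2, hct⟩

theorem exists_lt_ne_zero_of_tailCount_lt {c : Fin n → ℕ} {j : ℕ}
    (h : tailCount c j < tailCount c 0) : ∃ t : Fin n, (t : ℕ) < j ∧ c t ≠ 0 := by
  by_contra! hc
  refine h.ne ?_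
  rw [tailCount_zero, tailCount, Finset.sum_filter_of_ne]
  exact fun t _ hct => not_lt.1 fun htj => hct (hc t htj)

/-- With `c t` read as the number of parts of size `t` of a partition (zero parts included),
`tailCount c` lists its column lengths, column `0` counting all parts. So `StripRemoval r c d`
says that the partition of `d` arises from that of `c` by deleting at most `r` boxes from each
column and exactly `r` parts. -/
def StripRemoval (r : ℕ) (c d : Fin n → ℕ) : Prop :=
  tailCount c 0 = tailCount d 0 + r ∧
    ∀ j, tailCount d j ≤ tailCount c j ∧ tailCount c j ≤ tailCount d j + r

/-- `ShiftedBelow m c` and `StripRemovedBelow m c` bound the supports of the entries `₀₀` and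
`₁₀` of `L_{m-1}(u) ⋯ L_0(u)` applied to `|c⟩`. -/
def ShiftedBelow (m : ℕ) (c d : Fin n → ℕ) : Prop :=
  tailCount d 0 = tailCount c 0 ∧
    ∀ j, tailCount c j ≤ tailCount d j ∧ tailCount d j ≤ tailCount c j + 1 ∧
      (m ≤ j → tailCount d j = tailCount c j)

def StripRemovedBelow (m : ℕ) (c d : Fin n → ℕ) : Prop :=
  StripRemoval 1 c d ∧ ∀ j, m ≤ j → tailCount d j = tailCount c j

variable {c d e : Fin n → ℕ} {m m' r s : ℕ}

theorem StripRemoval.refl (c : Fin n → ℕ) : StripRemoval 0 c c :=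
  ⟨rfl, fun _ => ⟨le_rfl, le_rfl⟩⟩

theorem StripRemoval.trans (hcd : StripRemoval r c d) (hde : StripRemoval s d e) :
    StripRemoval (r + s) c e := by
  refine ⟨by rw [hcd.1, hde.1]; ring, fun j => ?_⟩
  have := hcd.2 j
  have := hde.2 j
  omega

theorem ShiftedBelow.mono (h : ShiftedBelow m c d) (hm : m ≤ m') : ShiftedBelow m' c d :=
  ⟨h.1, fun j => ⟨(h.2 j).1, (h.2 j).2.1, fun hj => (h.2 j).2.2 (hm.trans hj)⟩⟩

theorem StripRemovedBelow.mono (h : StripRemovedBelow m c d) (hm : m ≤ m') :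
    StripRemovedBelow m' c d :=
  ⟨h.1, fun j hj => h.2 j (hm.trans hj)⟩

theorem ShiftedBelow.stripRemovedBelow {i : Fin n} (h : ShiftedBelow i c (d + Pi.single i 1)) :
    StripRemovedBelow (i + 1) c d := by
  simp only [ShiftedBelow, tailCount_add, tailCount_single] at h
  refine ⟨⟨by simp at h; omega, fun j => ?_⟩, fun j hj => ?_⟩
  all_goals have := h.2 j; split_ifs at this <;> omega

theorem StripRemovedBelow.shiftedBelow {i : Fin n} (h : StripRemovedBelow i c d) :
    ShiftedBelow (i + 1) c (d + Pi.single i 1) := by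
  obtain ⟨⟨h0, hj⟩, hm⟩ := h
  simp only [ShiftedBelow, tailCount_add, tailCount_single]
  refine ⟨by simp; omega, fun j => ?_⟩
  have := hj j
  have := hm j
  split_ifs <;> omega

end TailCount

open Finsupp

section PhaseModel

variable {M : ℕ}

theorem phiOp_single (j : Fin (M + 1)) (c : Fin (M + 1) → ℕ) :
    phiOp M j (single c 1) =
      if c j = 0 then 0 else single (Function.update c j (c j - 1)) 1 := by
  by_cases h : c j = 0 <;> simp [phiOp, h]

theorem sendsAlong_phiOp (j : Fin (M + 1)) :
    SendsAlong (phiOp M j) fun c d => c = d + Pi.single j 1 := by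
  intro c
  rw [phiOp_single]
  split_ifs with h
  · exact zero_mem _
  · refine single_mem_supported ℂ 1 ?_
    ext t
    rcases eq_or_ne t j with rfl | ht <;> simp [*]
    omega

theorem sendsAlong_phiDagOp (j : Fin (M + 1)) :
    SendsAlong (phiDagOp M j) fun c d => d = c + Pi.single j 1 := by
  intro c
  rw [phiDagOp, lmapDomain_apply, mapDomain_single]
  refine single_mem_supported ℂ 1 ?_
  ext t
  rcases eq_or_ne t j with rfl | ht <;> simp [*]

variable (u : ℂ)

theorem Lop_mul_apply_zero_zero (j : Fin (M + 1))
    (P : Matrix (Fin 2) (Fin 2) (Module.End ℂ (FockM M))) :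
    (Lop M j u * P) 0 0 = u⁻¹ • P 0 0 + phiDagOp M j ∘ₗ P 1 0 := by
  simp [Lop, Matrix.mul_apply, Module.End.mul_eq_comp, LinearMap.smul_comp,
    Module.End.one_eq_id]

theorem Lop_mul_apply_one_zero (j : Fin (M + 1))
    (P : Matrix (Fin 2) (Fin 2) (Module.End ℂ (FockM M))) :
    (Lop M j u * P) 1 0 = phiOp M j ∘ₗ P 0 0 + u • P 1 0 := by
  simp [Lop, Matrix.mul_apply, Module.End.mul_eq_comp, LinearMap.smul_comp,
    Module.End.one_eq_id]

theorem sendsAlong_prod_Lop :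
    ∀ js : List (Fin (M + 1)), js.Pairwise (· > ·) → ∀ m, (∀ j ∈ js, (j : ℕ) < m) →
      SendsAlong ((js.map (Lop M · u)).prod 0 0) (ShiftedBelow m) ∧
        SendsAlong ((js.map (Lop M · u)).prod 1 0) (StripRemovedBelow m)
  | [], _, m, _ => by
    refine ⟨(sendsAlong_id (R := ℂ)).mono ?_, sendsAlong_zero _⟩
    rintro c _ rfl
    exact ⟨rfl, fun _ => ⟨le_rfl, by omega, fun _ => rfl⟩⟩
  | i :: js, hjs, m, hm => by
    obtain ⟨hi, hjs⟩ := List.pairwise_cons.1 hjs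
    obtain ⟨h0, h1⟩ := sendsAlong_prod_Lop js hjs i hi
    have him : (i : ℕ) + 1 ≤ m := hm i List.mem_cons_self
    rw [List.map_cons, List.prod_cons, Lop_mul_apply_zero_zero, Lop_mul_apply_one_zero]
    constructor
    · refine ((h0.smul _).mono fun _ _ h => h.mono (by omega)).add
        ((h1.comp (sendsAlong_phiDagOp i)).mono ?_)
      rintro c _ ⟨d, hd, rfl⟩
      exact hd.shiftedBelow.mono him
    · refine ((h0.comp (sendsAlong_phiOp i)).mono ?_).add
        ((h1.smul _).mono fun _ _ h => h.mono (by omega))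
      rintro c d' ⟨d, hd, rfl⟩
      exact hd.stripRemovedBelow.mono him

theorem Tmon_eq_prod : Tmon M u = ((List.ofFn Fin.rev).map (Lop M · u)).prod := by
  rw [Tmon, List.map_ofFn]
  rfl

theorem sendsAlong_Cop : SendsAlong (Cop M u) (StripRemoval 1) := by
  rw [Cop, Tmon_eq_prod]
  refine (sendsAlong_prod_Lop u _ ?_ (M + 1) fun j _ => j.isLt).2.mono fun _ _ h => h.1
  exact List.pairwise_ofFn.2 fun _ _ h => Fin.rev_lt_rev.2 h

theorem sendsAlong_prod_Cop :
    ∀ {r : ℕ} (v : Fin r → ℂ), SendsAlong (List.ofFn fun i => Cop M (v i)).prod (StripRemoval r)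
  | 0, _ => (sendsAlong_id (R := ℂ)).mono fun c _ h => h ▸ StripRemoval.refl c
  | r + 1, v => by
    rw [List.ofFn_succ, List.prod_cons]
    refine ((sendsAlong_prod_Cop _).comp (sendsAlong_Cop _)).mono ?_
    rintro c e ⟨d, hcd, hde⟩
    exact hcd.trans hde

theorem stripRemoval_of_covac_phiOp_ne_zero (j : Fin (M + 1)) {A : Module.End ℂ (FockM M)}
    {r : ℕ} (hA : SendsAlong A (StripRemoval r)) {c : Fin (M + 1) → ℕ}
    (h : (covac M).comp (phiOp M j * A) (single c 1) ≠ 0) :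
    StripRemoval r c (Pi.single j 1) := by
  obtain ⟨d, hcd, rfl⟩ := (hA.comp (sendsAlong_phiOp j)).apply_ne_zero h
  simpa [← Pi.zero_def] using hcd

end PhaseModel

theorem List.count_ofFn {α : Type*} [DecidableEq α] {n : ℕ} (f : Fin n → α) (a : α) :
    (List.ofFn f).count a = #{i | f i = a} := by
  rw [← Multiset.coe_count, ← Fin.univ_val_map, Multiset.count_map, Finset.card_def,
    Finset.filter_val]
  simp only [eq_comm]

section Partitions

variable {N M : ℕ}

theorem configOf_val_apply (lam : Fin N → Fin (M + 1)) (t : Fin (M + 1)) :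
    configOf M (fun i => (lam i : ℕ)) t = (List.ofFn lam).count t := by
  simp only [configOf, Fin.val_inj, List.count_ofFn]

theorem exists_eq_of_configOf_val_ne_zero {lam : Fin N → Fin (M + 1)} {t : Fin (M + 1)}
    (h : configOf M (fun i => (lam i : ℕ)) t ≠ 0) : ∃ i, lam i = t := by
  rwa [configOf_val_apply, ← Nat.pos_iff_ne_zero, List.count_pos_iff, List.mem_ofFn] at h

theorem Antitone.eq_of_configOf_eq {lam lam' : Fin N → Fin (M + 1)} (h : Antitone lam)
    (h' : Antitone lam')
    (hc : configOf M (fun i => (lam i : ℕ)) = configOf M (fun i => (lam' i : ℕ))) :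
    lam = lam' := by
  refine List.ofFn_injective (List.Perm.eq_of_sortedGE h.sortedGE_ofFn h'.sortedGE_ofFn ?_)
  refine List.perm_iff_count.2 fun t => ?_
  rw [← configOf_val_apply, ← configOf_val_apply, hc]

theorem exists_antitone_configOf_eq (c : Fin (M + 1) → ℕ) (hc : ∑ t, c t = N) :
    ∃ lam : Fin N → Fin (M + 1), Antitone lam ∧ configOf M (fun i => (lam i : ℕ)) = c := by
  set l := (∑ t, c t • {t} : Multiset (Fin (M + 1))).sort (· ≥ ·)
  have hcount (t : Fin (M + 1)) : l.count t = c t := by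
    simp [l, ← Multiset.coe_count, Multiset.count_sum', Multiset.count_singleton]
  have hlen : l.length = N := by simp [l, ← hc]
  obtain ⟨lam, hlam⟩ : ∃ lam : Fin N → Fin (M + 1), List.ofFn lam = l :=
    ⟨fun i => l[(i : ℕ)], List.ext_getElem (by simp [hlen]) (by simp)⟩
  refine ⟨lam, ?_, funext fun t => ?_⟩
  · rw [← List.sortedGE_ofFn_iff, hlam]
    exact (Multiset.pairwise_sort _ _).sortedGE
  · rw [configOf_val_apply, hlam, hcount]

theorem exists_antitone_of_stripRemoval (hN : 0 < N) (k : Fin (M + 1))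
    {c : Fin (M + 1) → ℕ} (h : StripRemoval (N - 1) c (Pi.single k 1)) :
    ∃ lam : Fin N → Fin (M + 1),
      (Antitone lam ∧ k ≤ (lam ⟨0, hN⟩ : ℕ) ∧ (lam ⟨N - 1, by omega⟩ : ℕ) ≤ k) ∧
        configOf M (fun i => (lam i : ℕ)) = c := by
  have hc0 := h.1
  have hck := (h.2 k).1
  have hck' := (h.2 (k + 1)).2
  simp only [tailCount_single, zero_le, le_refl, if_true, Nat.not_succ_le_self, if_false]
    at hc0 hck hck'
  obtain ⟨lam, hanti, hlam⟩ := exists_antitone_configOf_eq (N := N) c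
    (by rw [← tailCount_zero]; omega)
  obtain ⟨t, hkt, ht⟩ := exists_le_ne_zero_of_tailCount_ne_zero (Nat.one_le_iff_ne_zero.1 hck)
  obtain ⟨t', htk, ht'⟩ := exists_lt_ne_zero_of_tailCount_lt (c := c) (j := k + 1) (by omega)
  rw [← hlam] at ht ht'
  obtain ⟨i, rfl⟩ := exists_eq_of_configOf_val_ne_zero ht
  obtain ⟨i', rfl⟩ := exists_eq_of_configOf_val_ne_zero ht'
  have hi : (⟨0, hN⟩ : Fin N) ≤ i := Fin.le_iff_val_le_val.2 (Nat.zero_le _)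
  have hi' : i' ≤ ⟨N - 1, by omega⟩ := Fin.le_iff_val_le_val.2 (Nat.le_sub_one_of_lt i'.isLt)
  exact ⟨lam, ⟨hanti, hkt.trans (hanti hi), (hanti hi').trans (by omega)⟩, hlam⟩

end Partitions

/-- The conjugate state vector `⟨0| φ_k C(v_2)⋯C(v_N)` expands
over exactly the partitions `λ` with `(k) ⊆ λ ⊆ (M^{N-1}, k)`, i.e. partitions with
at most `N` parts, each part at most `M`, last part at most `k`, and first part at
least `k`. -/
theorem conjugate_state_vector_support (M N k : ℕ) (hN : 0 < N) (hk : k ≤ M)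
    (v : Fin (N - 1) → ℂ) :
    ∃ ψ : (Fin N → Fin (M + 1)) → ℂ,
      (covac M).comp
          (phiOp M ⟨k, by omega⟩ * (List.ofFn fun i : Fin (N - 1) => Cop M (v i)).prod) =
        ∑ lam ∈ Finset.univ.filter
            (fun lam : Fin N → Fin (M + 1) =>
              Antitone lam ∧ k ≤ (lam ⟨0, hN⟩ : ℕ) ∧ (lam ⟨N - 1, by omega⟩ : ℕ) ≤ k),
          ψ lam • colam M (fun i => (lam i : ℕ)) := by
  simp only [colam]
  refine exists_eq_sum_smul_lapply _ _ _ ?_ ?_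
  · intro lam hlam lam' hlam' h
    exact (mem_filter.1 hlam).2.1.eq_of_configOf_eq (mem_filter.1 hlam').2.1 h
  · intro c hc
    obtain ⟨lam, hlam, rfl⟩ := exists_antitone_of_stripRemoval hN _
      (stripRemoval_of_covac_phiOp_ne_zero _ (sendsAlong_prod_Cop v) hc)
    exact ⟨lam, mem_filter.2 ⟨mem_univ _, hlam⟩, rfl⟩
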